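/- arXiv:2512.16895 — 8 statements merged into one kernel-verified Lean document; each statement's English description precedes it below -/
import Mathlib

section
/- Given m candidates and committee size 0 < k < m, there exists a number of voters n and an approval profile on n voters whose core is empty if and only if the optimization problem max over rational vote distributions x ∈ Δ(2^C), min over k-committees W, max over nonempty deviations W' of size at most k, of (∑_{A : |A∩W'| > |A∩W|} x[A]) − |W'|/k, attains a nonnegative value. -/
/-!
A profile on `n` voters induces the rational vote distribution `A ↦ #{i | P i = A} / n`, under
which the support of a deviation is exactly the fraction of voters preferring it, so an empty
core of the profile is the nonnegativity condition for its distribution. Conversely, clearing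
the denominators of a rational distribution gives vote counts, and hence a profile, realizing it.
-/

open Finset

section VoteShare

variable {α : Type*}

def voteShare [DecidableEq α] {n : ℕ} (P : Fin n → α) (A : α) : ℚ :=
  (#{i | P i = A} : ℚ) / n

lemma voteShare_nonneg [DecidableEq α] {n : ℕ} (P : Fin n → α) (A : α) : 0 ≤ voteShare P A := by
  unfold voteShare
  positivity

lemma sum_filter_voteShare [Fintype α] [DecidableEq α] {n : ℕ} (P : Fin n → α)
    (p : α → Prop) [DecidablePred p] :
    ∑ A ∈ univ.filter p, voteShare P A = (#{i | p (P i)} : ℚ) / n := by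
  simp only [voteShare, ← sum_div, ← Nat.cast_sum, sum_card_fiberwise_eq_card_filter, mem_filter,
    mem_univ, true_and]

lemma sum_voteShare [Fintype α] [DecidableEq α] {n : ℕ} (hn : 0 < n) (P : Fin n → α) :
    ∑ A, voteShare P A = 1 := by
  have hn' : (n : ℚ) ≠ 0 := by exact_mod_cast hn.ne'
  simpa [hn'] using sum_filter_voteShare P (fun _ => True)

lemma exists_fin_card_fiber_eq [Fintype α] [DecidableEq α] (c : α → ℕ) {n : ℕ}
    (hn : ∑ A, c A = n) :
    ∃ P : Fin n → α, ∀ A, #{i | P i = A} = c A := by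
  let e : (Σ A, Fin (c A)) ≃ Fin n := Fintype.equivFinOfCardEq (by simp [hn])
  refine ⟨fun i => (e.symm i).1, fun A => ?_⟩
  calc #{i | (e.symm i).1 = A}
      = #{s : Σ A, Fin (c A) | s.1 = A} := (card_equiv e (by simp)).symm
    _ = #(({A} : Finset α).sigma fun _ => univ) := by
        congr 1; ext ⟨B, j⟩; simp
    _ = c A := by simp

lemma exists_pos_mul_eq_natCast [Fintype α] {x : α → ℚ} (hx : ∀ A, 0 ≤ x A) :
    ∃ N : ℕ, 0 < N ∧ ∃ c : α → ℕ, ∀ A, x A * N = c A := by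
  refine ⟨∏ A, (x A).den, prod_pos fun A _ => (x A).pos, ?_⟩
  suffices h : ∀ A, ∃ z : ℕ, x A * ((∏ A, (x A).den : ℕ) : ℚ) = z from
    ⟨fun A => (h A).choose, fun A => (h A).choose_spec⟩
  intro A
  obtain ⟨t, ht⟩ := dvd_prod_of_mem (fun A => (x A).den) (mem_univ A)
  refine ⟨(x A).num.toNat * t, ?_⟩
  have hnum : ((x A).num.toNat : ℚ) = (x A).num := by
    exact_mod_cast Int.toNat_of_nonneg (Rat.num_nonneg.mpr (hx A))
  rw [ht]
  push_cast
  rw [hnum, ← mul_assoc, Rat.mul_den_eq_num]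

lemma exists_voteShare_eq [Fintype α] [DecidableEq α] {x : α → ℚ} (hx0 : ∀ A, 0 ≤ x A)
    (hx1 : ∑ A, x A = 1) :
    ∃ n : ℕ, 0 < n ∧ ∃ P : Fin n → α, voteShare P = x := by
  obtain ⟨N, hN, c, hc⟩ := exists_pos_mul_eq_natCast hx0
  have hsum : ∑ A, c A = N := by
    have : ((∑ A, c A : ℕ) : ℚ) = N := by
      push_cast
      simp only [← hc, ← sum_mul, hx1, one_mul]
    exact_mod_cast this
  obtain ⟨P, hP⟩ := exists_fin_card_fiber_eq c hsum
  refine ⟨N, hN, P, funext fun A => ?_⟩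
  rw [voteShare, hP, ← hc, mul_div_cancel_right₀ _ (by exact_mod_cast hN.ne')]

end VoteShare

lemma le_mul_div_iff_sub_div_nonneg {K : Type*} [Field K] [LinearOrder K] [IsStrictOrderedRing K]
    {a c k n : K} (hk : 0 < k) (hn : 0 < n) : a ≤ c * k / n ↔ 0 ≤ c / n - a / k := by
  rw [sub_nonneg, div_le_div_iff₀ hk hn, le_div_iff₀ hn]

theorem stmt2_general {C : Type*} [Fintype C] [DecidableEq C] (k : ℕ)
    (hk : 0 < k) :
    (∃ n : ℕ, 0 < n ∧ ∃ P : Fin n → Finset C,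
        ∀ W : Finset C, W.card = k →
          ∃ W' : Finset C, W'.Nonempty ∧ W'.card ≤ k ∧
            (W'.card : ℚ) ≤ ((Finset.univ.filter
              (fun i => (P i ∩ W).card < (P i ∩ W').card)).card : ℚ) * k / n) ↔
    (∃ x : Finset C → ℚ, (∀ A, 0 ≤ x A) ∧ (∑ A : Finset C, x A = 1) ∧
        ∀ W : Finset C, W.card = k →
          ∃ W' : Finset C, W'.Nonempty ∧ W'.card ≤ k ∧
            0 ≤ (∑ A ∈ Finset.univ.filter
                  (fun A : Finset C => (A ∩ W).card < (A ∩ W').card), x A)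
                - (W'.card : ℚ) / k) := by
  have hkQ : (0 : ℚ) < k := by exact_mod_cast hk
  constructor
  · rintro ⟨n, hn, P, hP⟩
    refine ⟨voteShare P, voteShare_nonneg P, sum_voteShare hn P, fun W hW => ?_⟩
    obtain ⟨W', hne, hle, hdev⟩ := hP W hW
    refine ⟨W', hne, hle, ?_⟩
    rwa [sum_filter_voteShare, ← le_mul_div_iff_sub_div_nonneg hkQ (by exact_mod_cast hn)]
  · rintro ⟨x, hx0, hx1, hx⟩
    obtain ⟨n, hn, P, rfl⟩ := exists_voteShare_eq hx0 hx1
    refine ⟨n, hn, P, fun W hW => ?_⟩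
    obtain ⟨W', hne, hle, hdev⟩ := hx W hW
    refine ⟨W', hne, hle, ?_⟩
    rwa [sum_filter_voteShare, ← le_mul_div_iff_sub_div_nonneg hkQ (by exact_mod_cast hn)]
      at hdev

/-- there exists a profile (for some number of voters) with empty
core iff some rational vote distribution achieves a nonnegative min-max value. -/
theorem stmt2 {C : Type*} [Fintype C] [DecidableEq C] (m k : ℕ)
    (hm : Fintype.card C = m) (hk : 0 < k) (hkm : k < m) :
    (∃ n : ℕ, 0 < n ∧ ∃ P : Fin n → Finset C,
        ∀ W : Finset C, W.card = k →
          ∃ W' : Finset C, W'.Nonempty ∧ W'.card ≤ k ∧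
            (W'.card : ℚ) ≤ ((Finset.univ.filter
              (fun i => (P i ∩ W).card < (P i ∩ W').card)).card : ℚ) * k / n) ↔
    (∃ x : Finset C → ℚ, (∀ A, 0 ≤ x A) ∧ (∑ A : Finset C, x A = 1) ∧
        ∀ W : Finset C, W.card = k →
          ∃ W' : Finset C, W'.Nonempty ∧ W'.card ≤ k ∧
            0 ≤ (∑ A ∈ Finset.univ.filter
                  (fun A : Finset C => (A ∩ W).card < (A ∩ W').card), x A)
                - (W'.card : ℚ) / k) :=
  stmt2_general k hk
end

section
/- For any m and k with 0 < k < m, consider the vote distribution x putting mass 1/(k+1) on each singleton {c} for c in a fixed set B ⊆ C with |B| = k+1, and 0 elsewhere. Then for every k-committee W, the maximum over nonempty deviations W' with |W'| ≤ k of (∑_{A : |A∩W'| > |A∩W|} x[A]) − |W'|/k is at least −1/(k(k+1)). Consequently the optimal value of the max-min-max problem is at least −1/(k(k+1)). -/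
/-!
Given a committee `W` of size `k`, some `c ∈ B` lies outside `W`, since `|B| = k + 1`. The
deviation `{c}` is supported by exactly the voters approving `{c}`, because every other singleton
ballot meets `{c}` in the empty set. Its excess support is `1/(k+1) - 1/k = -1/(k(k+1))`.
-/

open Finset

lemma sum_filter_card_inter_lt_card_inter_singleton {C β : Type*} [Fintype C] [DecidableEq C]
    [AddCommMonoid β] (x : Finset C → β)
    (hx : ∀ A : Finset C, A.card ≠ 1 → x A = 0) {W : Finset C} {c : C} (hcW : c ∉ W) :
    ∑ A ∈ univ.filter (fun A : Finset C => (A ∩ W).card < (A ∩ {c}).card), x A = x {c} := by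
  refine sum_eq_single_of_mem ({c} : Finset C) ?_ ?_
  · simp [singleton_inter_of_notMem hcW]
  intro A hA hAc
  by_cases hA1 : A.card = 1
  · obtain ⟨a, rfl⟩ := card_eq_one.mp hA1
    have hac : a ≠ c := fun h => hAc (h ▸ rfl)
    simp [singleton_inter_of_notMem (mt mem_singleton.mp hac)] at hA
  · exact hx A hA1

lemma one_div_add_one_sub_one_div {K : Type*} [Field K] {k : K} (hk : k ≠ 0) (hk1 : k + 1 ≠ 0) :
    1 / (k + 1) - 1 / k = -(1 / (k * (k + 1))) := by
  field_simp
  ring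

theorem stmt3_general {C : Type*} [Fintype C] [DecidableEq C] (k : ℕ)
    (hk : 0 < k)
    (B : Finset C) (hB : B.card = k + 1)
    (x : Finset C → ℚ)
    (hx : ∀ A : Finset C, x A = if A.card = 1 ∧ A ⊆ B then 1 / ((k : ℚ) + 1) else 0) :
    ∀ W : Finset C, W.card = k →
      ∃ W' : Finset C, W'.Nonempty ∧ W'.card ≤ k ∧
        -(1 / ((k : ℚ) * ((k : ℚ) + 1))) ≤
          (∑ A ∈ Finset.univ.filter (fun A : Finset C => (A ∩ W).card < (A ∩ W').card), x A)
            - (W'.card : ℚ) / k := by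
  intro W hW
  obtain ⟨c, hcB, hcW⟩ := exists_mem_notMem_of_card_lt_card (s := W) (t := B) (by omega)
  refine ⟨{c}, singleton_nonempty c, (card_singleton c).trans_le hk, le_of_eq ?_⟩
  have hx_singleton : ∀ A : Finset C, A.card ≠ 1 → x A = 0 := fun A hA => by simp [hx, hA]
  rw [sum_filter_card_inter_lt_card_inter_singleton x hx_singleton hcW, hx, card_singleton,
    Nat.cast_one, if_pos ⟨card_singleton c, singleton_subset_iff.mpr hcB⟩,
    one_div_add_one_sub_one_div (by positivity) (by positivity)]

/-- the distribution putting mass `1/(k+1)` on each singleton of a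
fixed `(k+1)`-set `B` gives every `k`-committee a deviation of excess support
at least `-1/(k(k+1))`. -/
theorem stmt3 {C : Type*} [Fintype C] [DecidableEq C] (m k : ℕ)
    (hm : Fintype.card C = m) (hk : 0 < k) (hkm : k < m)
    (B : Finset C) (hB : B.card = k + 1)
    (x : Finset C → ℚ)
    (hx : ∀ A : Finset C, x A = if A.card = 1 ∧ A ⊆ B then 1 / ((k : ℚ) + 1) else 0) :
    ∀ W : Finset C, W.card = k →
      ∃ W' : Finset C, W'.Nonempty ∧ W'.card ≤ k ∧
        -(1 / ((k : ℚ) * ((k : ℚ) + 1))) ≤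
          (∑ A ∈ Finset.univ.filter (fun A : Finset C => (A ∩ W).card < (A ∩ W').card), x A)
            - (W'.card : ℚ) / k :=
  stmt3_general k hk B hB x hx
end

section
/- Let m, k with 0 < k < m, and let D be a deviation function from k-committees to nonempty deviations of size at most k such that |D(W)| = 1 for every k-committee W except possibly one committee W*, with t := |D(W*)|. Then there exists a probability distribution q over k-committees such that (1) for every vote A ⊆ C, the q-probability of the event |W ∩ A| < |D(W) ∩ A| is at most 1/(k+2−t), and (2) the q-expectation of |D(W)| equals (k+1)/(k+2−t). Consequently, 1/(k+2−t) − (1/k)·(k+1)/(k+2−t) = −1/(k(k+2−t)), so the dual linear program value for D is at most −1/(k(k+2−t)). -/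
/-!
Start with `W₁ = W*` and choose greedily `k`-committees `W₂, …, W_{k+2-t}`, all different from `W*`,
such that `W_j` contains `D(W_i) \ W_i` for every `i < j`: these sets cover at most
`t + j - 2 ≤ k` elements, and adding a point outside `W*` keeps the new committee away from `W*`.
Let `q` be uniform on the chain. For `j ≥ 2` the deviation `D(W_j)` is a singleton, so a vote `A`
preferring `D(W_j)` to `W_j` misses `W_j`; then `D(W_i) ∩ A ⊆ W_i ∩ A` for all `i < j`, and `A`
does not prefer `D(W_i)`. Hence `A` blocks at most one committee of the chain, while the
deviation sizes add up to `t + (k + 1 - t) = k + 1`.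
-/

open Finset

section EmpiricalDist

variable {α : Type*} [DecidableEq α]

/-- The uniform distribution on the multiset `{s 0, …, s (N - 1)}`. -/
def empiricalDist (s : ℕ → α) (N : ℕ) (a : α) : ℚ :=
  (#{i ∈ range N | s i = a} : ℚ) / N

variable (s : ℕ → α) (N : ℕ)

lemma empiricalDist_nonneg (a : α) : 0 ≤ empiricalDist s N a := by
  unfold empiricalDist
  positivity

lemma empiricalDist_eq_zero {a : α} (h : ∀ i < N, s i ≠ a) : empiricalDist s N a = 0 := by
  rw [empiricalDist, filter_false_of_mem fun i hi => h i (mem_range.1 hi)]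
  simp

lemma sum_empiricalDist_mul [Fintype α] (f : α → ℚ) :
    ∑ a, empiricalDist s N a * f a = (∑ i ∈ range N, f (s i)) / N := by
  rw [← sum_fiberwise' (range N) s f, sum_div]
  refine sum_congr rfl fun a _ => ?_
  rw [empiricalDist, sum_const, nsmul_eq_mul]
  ring

lemma sum_empiricalDist [Fintype α] (hN : N ≠ 0) : ∑ a, empiricalDist s N a = 1 := by
  simpa [hN] using sum_empiricalDist_mul s N 1

lemma sum_filter_empiricalDist [Fintype α] (p : α → Prop) [DecidablePred p] :
    ∑ a with p a, empiricalDist s N a = #{i ∈ range N | p (s i)} / N := by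
  calc ∑ a with p a, empiricalDist s N a
      = ∑ a, empiricalDist s N a * if p a then 1 else 0 := by simp_rw [sum_filter, mul_boole]
    _ = _ := by rw [sum_empiricalDist_mul, sum_boole]

end EmpiricalDist

lemma Finset.exists_superset_card_eq_ne {α : Type*} [Fintype α] [DecidableEq α]
    {U V : Finset α} {k : ℕ} {b : α} (hbV : b ∉ V) (hU : #(insert b U) ≤ k)
    (hk : k ≤ Fintype.card α) : ∃ W, U ⊆ W ∧ #W = k ∧ W ≠ V := by
  obtain ⟨W, hUW, hW⟩ := exists_superset_card_eq hU hk
  exact ⟨W, (subset_insert b U).trans hUW, hW,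
    fun h => hbV (h ▸ hUW (mem_insert_self b U))⟩

section DeviationChain

variable {C : Type*} [DecidableEq C] (D : Finset C → Finset C)

-- A vote preferring the at most one-element `D W'` to `W'` must miss `W'`.
lemma card_deviation_inter_le_of_sdiff_subset {W W' A : Finset C} (hsub : D W \ W ⊆ W')
    (hW' : #(D W') ≤ 1) (hA : #(W' ∩ A) < #(D W' ∩ A)) : #(D W ∩ A) ≤ #(W ∩ A) := by
  have hW'A : W' ∩ A = ∅ := by
    have := card_le_card (inter_subset_left : D W' ∩ A ⊆ D W')
    rw [← card_eq_zero]
    omega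
  refine card_le_card fun x hx => ?_
  rw [mem_inter] at hx ⊢
  by_contra hxW
  have hx' : x ∈ W' ∩ A := mem_inter.2 ⟨hsub (mem_sdiff.2 ⟨hx.1, fun h => hxW ⟨h, hx.2⟩⟩), hx.2⟩
  simp [hW'A] at hx'

/-- `s i` is the committee `W_{i+1}` of the construction, so `s 0 = V` plays the role of `W*`. -/
structure IsDeviationChain (V : Finset C) (k n : ℕ) (s : ℕ → Finset C) : Prop where
  zero : s 0 = V
  card_eq : ∀ i ≤ n, #(s i) = k
  card_deviation : ∀ i, 0 < i → i ≤ n → #(D (s i)) = 1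
  sdiff_subset : ∀ i j, i < j → j ≤ n → D (s i) \ s i ⊆ s j

namespace IsDeviationChain

variable {D} {V : Finset C} {k n : ℕ} {s : ℕ → Finset C}

lemma sum_card_deviation (hs : IsDeviationChain D V k n s) :
    ∑ i ∈ range (n + 1), #(D (s i)) = #(D V) + n := by
  rw [sum_range_succ', hs.zero, add_comm,
    sum_congr rfl fun i hi => hs.card_deviation (i + 1) i.succ_pos (by simp at hi; omega)]
  simp

lemma card_filter_prefers_le_one (hs : IsDeviationChain D V k n s) (A : Finset C) :
    #{i ∈ range (n + 1) | #(s i ∩ A) < #(D (s i) ∩ A)} ≤ 1 := by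
  have hexcl : ∀ i j, i < j → j ≤ n → #(s j ∩ A) < #(D (s j) ∩ A) →
      ¬ #(s i ∩ A) < #(D (s i) ∩ A) := fun i j hij hj hA =>
    not_lt.2 <| card_deviation_inter_le_of_sdiff_subset D (hs.sdiff_subset i j hij hj)
      (hs.card_deviation j (by omega) hj).le hA
  refine card_le_one.2 fun i hi j hj => ?_
  simp only [mem_filter, mem_range] at hi hj
  by_contra hij
  rcases Nat.lt_or_gt_of_ne hij with h | h
  · exact hexcl i j h (by omega) hj.2 hi.2
  · exact hexcl j i h (by omega) hi.2 hj.2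

lemma card_biUnion_sdiff_le (hs : IsDeviationChain D V k n s) :
    #((range (n + 1)).biUnion fun i => D (s i) \ s i) ≤ #(D V \ V) + n := by
  refine card_biUnion_le.trans ?_
  rw [sum_range_succ', hs.zero, add_comm]
  gcongr
  calc ∑ i ∈ range n, #(D (s (i + 1)) \ s (i + 1))
      ≤ ∑ i ∈ range n, #(D (s (i + 1))) := sum_le_sum fun i _ => card_le_card Finset.sdiff_subset
    _ = n := by
      rw [sum_congr rfl fun i hi => hs.card_deviation (i + 1) i.succ_pos (by simp at hi; omega)]
      simp

/-- A point outside `V` whose addition keeps the excess sets of the chain within `#(D V) + n`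
elements: a point of `D V \ V` if there is one, any point outside `V` otherwise. -/
lemma exists_notMem_card_insert_le (hs : IsDeviationChain D V k n s) (hDV : (D V).Nonempty)
    (hV : ∃ b, b ∉ V) : ∃ b ∉ V,
      #(insert b ((range (n + 1)).biUnion fun i => D (s i) \ s i)) ≤ #(D V) + n := by
  have hU := hs.card_biUnion_sdiff_le
  have hexcess : #(D V \ V) ≤ #(D V) := card_le_card Finset.sdiff_subset
  obtain ⟨b, hb⟩ | hempty := (D V \ V).eq_empty_or_nonempty.symm
  · have hbU : b ∈ (range (n + 1)).biUnion fun i => D (s i) \ s i :=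
      mem_biUnion.2 ⟨0, by simp, hs.zero ▸ hb⟩
    exact ⟨b, (mem_sdiff.1 hb).2, by rw [insert_eq_of_mem hbU]; omega⟩
  · obtain ⟨b, hb⟩ := hV
    have := card_insert_le b ((range (n + 1)).biUnion fun i => D (s i) \ s i)
    have := hDV.card_pos
    rw [hempty, card_empty] at hU
    exact ⟨b, hb, by omega⟩

lemma extend (hs : IsDeviationChain D V k n s) {W : Finset C}
    (hsub : (range (n + 1)).biUnion (fun i => D (s i) \ s i) ⊆ W) (hW : #W = k)
    (hDW : #(D W) = 1) :
    IsDeviationChain D V k (n + 1) fun i => if i ≤ n then s i else W where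
  zero := by simpa using hs.zero
  card_eq i hi := by
    split_ifs with h
    · exact hs.card_eq i h
    · exact hW
  card_deviation i hi0 hi := by
    split_ifs with h
    · exact hs.card_deviation i hi0 h
    · exact hDW
  sdiff_subset i j hij hj := by
    have hin : i ≤ n := by omega
    simp only [if_pos hin]
    split_ifs with h
    · exact hs.sdiff_subset i j hij h
    · exact (subset_biUnion_of_mem (fun i => D (s i) \ s i) (by simp; omega)).trans hsub

end IsDeviationChain

lemma exists_isDeviationChain [Fintype C] {V : Finset C} {k : ℕ} (hV : #V = k)
    (hk : k < Fintype.card C) (hDV : (D V).Nonempty)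
    (hsing : ∀ W : Finset C, #W = k → W ≠ V → #(D W) = 1) :
    ∀ n, #(D V) + n ≤ k + 1 → ∃ s, IsDeviationChain D V k n s
  | 0, _ => ⟨fun _ => V,
      { zero := rfl
        card_eq := fun _ _ => hV
        card_deviation := fun _ hi hi' => absurd hi' (by omega)
        sdiff_subset := fun _ _ _ _ => by omega }⟩
  | n + 1, hn => by
    obtain ⟨s, hs⟩ := exists_isDeviationChain hV hk hDV hsing n (by omega)
    have hVc : ∃ b, b ∉ V := by
      by_contra! h
      have : V = univ := eq_univ_of_forall h
      rw [this, card_univ] at hV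
      omega
    obtain ⟨b, hbV, hb⟩ := hs.exists_notMem_card_insert_le hDV hVc
    obtain ⟨W, hsub, hW, hWV⟩ := exists_superset_card_eq_ne hbV (hb.trans (by omega)) hk.le
    exact ⟨_, hs.extend hsub hW (hsing W hW hWV)⟩

end DeviationChain

/-- for a deviation function `D` that is singleton-valued except
possibly at one committee `Wstar` (with `t = |D(Wstar)|`), there is a
distribution `q` over `k`-committees whose probability of any vote preferring
its deviation is at most `1/(k+2-t)`, whose expected deviation size equals
`(k+1)/(k+2-t)`, so the dual LP value for `D` is at most `-1/(k(k+2-t))`. -/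
theorem stmt5 {C : Type*} [Fintype C] [DecidableEq C] (m k : ℕ)
    (hm : Fintype.card C = m) (hk : 0 < k) (hkm : k < m)
    (D : Finset C → Finset C)
    (hD : ∀ W : Finset C, W.card = k → (D W).Nonempty ∧ (D W).card ≤ k)
    (Wstar : Finset C) (hWstar : Wstar.card = k)
    (hsing : ∀ W : Finset C, W.card = k → W ≠ Wstar → (D W).card = 1)
    (t : ℕ) (ht : t = (D Wstar).card) :
    ∃ q : Finset C → ℚ,
      (∀ W, 0 ≤ q W) ∧ (∀ W : Finset C, W.card ≠ k → q W = 0) ∧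
      (∑ W : Finset C, q W = 1) ∧
      (∀ A : Finset C,
        (∑ W ∈ Finset.univ.filter
            (fun W : Finset C => W.card = k ∧ (W ∩ A).card < (D W ∩ A).card), q W)
          ≤ 1 / ((k : ℚ) + 2 - (t : ℚ))) ∧
      (∑ W : Finset C, q W * ((D W).card : ℚ)) = ((k : ℚ) + 1) / ((k : ℚ) + 2 - (t : ℚ)) ∧
      1 / ((k : ℚ) + 2 - (t : ℚ)) - (1 / (k : ℚ)) * (((k : ℚ) + 1) / ((k : ℚ) + 2 - (t : ℚ)))
        = -(1 / ((k : ℚ) * ((k : ℚ) + 2 - (t : ℚ)))) := by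
  obtain ⟨hDne, hDle⟩ := hD Wstar hWstar
  set n := k + 1 - t
  obtain ⟨s, hs⟩ :=
    exists_isDeviationChain D hWstar (hm ▸ hkm) hDne hsing n (by omega)
  have hN : ((n + 1 : ℕ) : ℚ) = k + 2 - t := by
    rw [Nat.cast_add, Nat.cast_sub (by omega)]
    push_cast
    ring
  refine ⟨empiricalDist s (n + 1), empiricalDist_nonneg s _,
    fun W hW => empiricalDist_eq_zero s _ fun i hi h => hW (h ▸ hs.card_eq i (by omega)),
    sum_empiricalDist s _ n.succ_ne_zero, fun A => ?_, ?_, ?_⟩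
  · rw [sum_filter_empiricalDist, ← hN]
    have hblocked : #{i ∈ range (n + 1) | #(s i) = k ∧ #(s i ∩ A) < #(D (s i) ∩ A)} ≤ 1 :=
      (card_le_card (monotone_filter_right _ fun _ _ h => h.2)).trans
        (hs.card_filter_prefers_le_one A)
    gcongr
    exact_mod_cast hblocked
  · rw [sum_empiricalDist_mul, ← Nat.cast_sum, hs.sum_card_deviation, hN, ← ht]
    congr 1
    push_cast [n, Nat.cast_sub (by omega : t ≤ k + 1)]
    ring
  · have hk0 : (k : ℚ) ≠ 0 := by positivity
    have hN0 : (k : ℚ) + 2 - t ≠ 0 := by rw [← hN]; positivity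
    field_simp
    ring
end

section
/- Let m = k+1 (k ≥ 1) and let D be any deviation function from k-committees to nonempty deviations of size at most k. Then there exists a probability distribution q over k-committees and a real u ≥ 0 such that: for every vote A ⊆ C, the q-probability of the event |W ∩ A| < |D(W) ∩ A| is at most u, and u − (1/k)·E_{W∼q}[|D(W)|] ≤ −1/(k(k+1)). In particular the dual LP value is at most −1/(k(k+1)) for every D. -/
/-!
Write `W_j` for the committee omitting `j`; a vote `A` strictly prefers `D W_j` to `W_j` exactly
when `j ∈ A ⊆ D W_j`. If some `D W_j ⊆ W_j`, no vote ever prefers the deviation, and the point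
mass on `W_j` with `u = 0` works. Otherwise `j ∈ D W_j` for every `j`; take a maximal set `S` of
indices no two of which lie in each other's deviation. Maximality makes the deviations `D W_j`,
`j ∈ S`, cover all `k + 1` candidates, while a single vote can prefer the deviation of at most one
`W_j`, `j ∈ S`. So the uniform distribution on these committees with `u = 1 / |S|` has expected
deviation size at least `(k + 1) / |S|` and value at most `-1 / (k |S|) ≤ -1 / (k (k + 1))`.
-/

open Finset

variable {α : Type*} [Fintype α] [DecidableEq α]

theorem mem_and_subset_of_card_erase_inter_lt {j : α} {A B : Finset α}
    (h : (univ.erase j ∩ A).card < (B ∩ A).card) : j ∈ A ∧ A ⊆ B := by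
  have hA : (B ∩ A).card ≤ A.card := card_le_card inter_subset_right
  rw [erase_inter, univ_inter] at h
  have hj : j ∈ A := by
    by_contra hj
    rw [erase_eq_of_notMem hj] at h
    omega
  have hBA : B ∩ A = A :=
    eq_of_subset_of_card_le inter_subset_right (by have := card_erase_of_mem hj; omega)
  exact ⟨hj, hBA ▸ inter_subset_left⟩

theorem exists_pairwise_cover (F : α → Finset α) (hF : ∀ a, a ∈ F a) :
    ∃ S : Finset α, (S : Set α).Pairwise (fun a b => ¬(a ∈ F b ∧ b ∈ F a)) ∧
      ∀ c, ∃ a ∈ S, c ∈ F a := by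
  classical
  obtain ⟨S, hS, hmax⟩ := exists_max_image
    (univ.filter fun S : Finset α => (S : Set α).Pairwise fun a b => ¬(a ∈ F b ∧ b ∈ F a))
    card ⟨∅, by simp⟩
  simp only [mem_filter, mem_univ, true_and] at hS hmax
  refine ⟨S, hS, fun c => ?_⟩
  by_cases hc : c ∈ S
  · exact ⟨c, hc, hF c⟩
  by_contra! hout
  have hins : ((insert c S : Finset α) : Set α).Pairwise fun a b => ¬(a ∈ F b ∧ b ∈ F a) := by
    rw [coe_insert]
    exact hS.insert_of_notMem hc fun b hb => ⟨fun h => hout b hb h.1, fun h => hout b hb h.2⟩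
  have := hmax _ hins
  rw [card_insert_of_notMem hc] at this
  omega

theorem card_filter_deviates_le_one (D : Finset α → Finset α) {S : Finset α}
    (hS : (S : Set α).Pairwise fun a b => ¬(a ∈ D (univ.erase b) ∧ b ∈ D (univ.erase a)))
    (A : Finset α) :
    ((S.image (univ.erase ·)).filter fun W => (W ∩ A).card < (D W ∩ A).card).card ≤ 1 := by
  refine card_le_one.2 fun W hW W' hW' => ?_
  simp only [mem_filter, mem_image] at hW hW'
  obtain ⟨⟨a, ha, rfl⟩, hdev⟩ := hW
  obtain ⟨⟨b, hb, rfl⟩, hdev'⟩ := hW'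
  obtain ⟨haA, hAa⟩ := mem_and_subset_of_card_erase_inter_lt hdev
  obtain ⟨hbA, hAb⟩ := mem_and_subset_of_card_erase_inter_lt hdev'
  by_contra hne
  exact hS ha hb (fun hab => hne (hab ▸ rfl)) ⟨hAb haA, hAa hbA⟩

theorem card_le_sum_card_of_forall_exists_mem {ι : Type*} {S : Finset ι} {F : ι → Finset α}
    (hcover : ∀ c, ∃ a ∈ S, c ∈ F a) : Fintype.card α ≤ ∑ a ∈ S, (F a).card :=
  (card_le_card fun c _ => mem_biUnion.2 (hcover c)).trans card_biUnion_le

theorem exists_dual_of_uniform {k : ℕ} (hk : 1 ≤ k) (D : Finset α → Finset α)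
    (𝒲 : Finset (Finset α)) (n : ℕ) (hcard : ∀ W ∈ 𝒲, W.card = k) (h𝒲 : 𝒲.card ≤ k + 1)
    (hdev : ∀ A : Finset α, (𝒲.filter fun W => (W ∩ A).card < (D W ∩ A).card).card ≤ n)
    (hsum : n * k + 1 ≤ ∑ W ∈ 𝒲, (D W).card) :
    ∃ (q : Finset α → ℚ) (u : ℚ),
      (∀ Wc, 0 ≤ q Wc) ∧ (∀ Wc : Finset α, Wc.card ≠ k → q Wc = 0) ∧
      (∑ Wc : Finset α, q Wc = 1) ∧ 0 ≤ u ∧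
      (∀ A : Finset α,
        (∑ Wc ∈ Finset.univ.filter
            (fun Wc : Finset α => Wc.card = k ∧ (Wc ∩ A).card < (D Wc ∩ A).card),
          q Wc) ≤ u) ∧
      u - (∑ Wc : Finset α, q Wc * ((D Wc).card : ℚ)) / (k : ℚ)
        ≤ -(1 / ((k : ℚ) * ((k : ℚ) + 1))) := by
  have hT : (0 : ℚ) < 𝒲.card := by
    have : ∑ W ∈ 𝒲, (D W).card ≠ 0 := by omega
    exact_mod_cast (nonempty_of_sum_ne_zero this).card_pos
  refine ⟨fun W => if W ∈ 𝒲 then 1 / 𝒲.card else 0, n / 𝒲.card, fun W => ?_, fun W hW => ?_,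
    ?_, by positivity, fun A => ?_, ?_⟩
  · dsimp only
    split_ifs <;> positivity
  · exact if_neg fun hW𝒲 => hW (hcard W hW𝒲)
  · rw [sum_ite_mem, univ_inter, sum_const, nsmul_eq_mul, mul_one_div_cancel hT.ne']
  · rw [sum_ite_mem, sum_const, nsmul_eq_mul, ← div_eq_mul_one_div]
    have hsub : (univ.filter fun W : Finset α => W.card = k ∧ (W ∩ A).card < (D W ∩ A).card) ∩ 𝒲
        ⊆ 𝒲.filter fun W => (W ∩ A).card < (D W ∩ A).card := by
      intro W hW
      simp only [mem_inter, mem_filter, mem_univ, true_and] at hW ⊢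
      exact ⟨hW.2, hW.1.2⟩
    gcongr
    exact_mod_cast (card_le_card hsub).trans (hdev A)
  · simp only [ite_mul, zero_mul, one_div_mul_eq_div]
    rw [sum_ite_mem, univ_inter, ← sum_div]
    have hk' : (1 : ℚ) ≤ k := by exact_mod_cast hk
    have hsum' : (n : ℚ) * k + 1 ≤ ∑ W ∈ 𝒲, ((D W).card : ℚ) := by exact_mod_cast hsum
    have h𝒲' : (𝒲.card : ℚ) ≤ k + 1 := by exact_mod_cast h𝒲
    calc (n : ℚ) / 𝒲.card - (∑ W ∈ 𝒲, ((D W).card : ℚ)) / 𝒲.card / k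
        = -(((∑ W ∈ 𝒲, ((D W).card : ℚ)) - n * k) / (𝒲.card * k)) := by field_simp; ring
      _ ≤ -(1 / (𝒲.card * k)) := by gcongr; linarith
      _ ≤ -(1 / (k * (k + 1))) := by rw [mul_comm (k : ℚ)]; gcongr

/-- for `m = k+1`, for every deviation function `D` there is a
distribution `q` over `k`-committees and `u ≥ 0` with the probability of any
vote preferring its deviation at most `u` and
`u - E[|D(W)|]/k ≤ -1/(k(k+1))`. -/
theorem stmt8 (k : ℕ) (hk : 1 ≤ k) (m : ℕ) (hm : m = k + 1)
    (D : Finset (Fin m) → Finset (Fin m))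
    (hD : ∀ Wc : Finset (Fin m), Wc.card = k → (D Wc).Nonempty ∧ (D Wc).card ≤ k) :
    ∃ (q : Finset (Fin m) → ℚ) (u : ℚ),
      (∀ Wc, 0 ≤ q Wc) ∧ (∀ Wc : Finset (Fin m), Wc.card ≠ k → q Wc = 0) ∧
      (∑ Wc : Finset (Fin m), q Wc = 1) ∧ 0 ≤ u ∧
      (∀ A : Finset (Fin m),
        (∑ Wc ∈ Finset.univ.filter
            (fun Wc : Finset (Fin m) => Wc.card = k ∧ (Wc ∩ A).card < (D Wc ∩ A).card),
          q Wc) ≤ u) ∧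
      u - (∑ Wc : Finset (Fin m), q Wc * ((D Wc).card : ℚ)) / (k : ℚ)
        ≤ -(1 / ((k : ℚ) * ((k : ℚ) + 1))) := by
  subst hm
  have hcard : ∀ j : Fin (k + 1), (univ.erase j).card = k := fun j => by simp
  by_cases hsub : ∃ j, D (univ.erase j) ⊆ univ.erase j
  · obtain ⟨j, hj⟩ := hsub
    refine exists_dual_of_uniform hk D {univ.erase j} 0 (by simp [hcard]) (by simp)
      (fun A => ?_) (by simpa using (hD _ (hcard j)).1)
    simpa [filter_singleton] using card_le_card (inter_subset_inter_right hj)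
  · push Not at hsub
    have hself : ∀ j, j ∈ D (univ.erase j) := fun j => by
      obtain ⟨c, hcD, hc⟩ := not_subset.1 (hsub j)
      simpa [show c = j by simpa using hc] using hcD
    obtain ⟨S, hS, hcover⟩ := exists_pairwise_cover _ hself
    have hinj : Set.InjOn (univ.erase ·) (S : Set (Fin (k + 1))) :=
      (erase_injOn univ).mono (coe_subset.2 (subset_univ S))
    refine exists_dual_of_uniform hk D (S.image (univ.erase ·)) 1 (by simp [hcard])
      ((card_image_le.trans (card_le_univ S)).trans (by simp)) (card_filter_deviates_le_one D hS) ?_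
    rw [sum_image hinj]
    simpa using card_le_sum_card_of_forall_exists_mem hcover
end

section
/- Fix k ≥ 1 and m = k+1. Suppose for every deviation function D from k-committees to nonempty deviations of size at most k, there exists a probability distribution q over k-committees such that for all votes A ⊆ C, Pr_{W∼q}[|W ∩ A| < |D(W) ∩ A|] < E_{W∼q}[|D(W)|]/k. Then every vote distribution over 2^C admits a core-stable k-committee. -/
/-!
Suppose a vote distribution `x` has no core-stable `k`-committee, and let `D` send every
`k`-committee `W` to a deviation `D W` blocking it. Apply the hypothesis to `D` and count the
`q ⊗ x`-mass of the pairs `(W, A)` in which the vote `A` prefers `D W` to `W` in two ways.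
Summing over votes first, every vote contributes less than `E[|D W|] / k`, so the total is
less than `E[|D W|] / k`. Summing over committees first, `W` contributes `q W` times the
support of `D W` against `W`, which is at least `q W * |D W| / k` since `D W` blocks `W`;
so the total is at least `E[|D W|] / k`.
-/

open Finset

theorem sum_mul_sum_filter_comm {α β R : Type*} [Fintype α] [Fintype β] [CommSemiring R]
    (r : α → β → Prop) [∀ a b, Decidable (r a b)] (f : α → R) (g : β → R) :
    ∑ a, f a * ∑ b ∈ univ.filter (r a), g b = ∑ b, g b * ∑ a ∈ univ.filter (r · b), f a := by
  simp only [mul_sum, sum_filter]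
  rw [sum_comm]
  refine sum_congr rfl fun b _ => sum_congr rfl fun a _ => ?_
  split_ifs <;> simp [mul_comm]

theorem sum_mul_lt_of_forall_lt {ι R : Type*} [Fintype ι] [CommRing R] [LinearOrder R]
    [IsStrictOrderedRing R] {w f : ι → R} {c : R} (hw : ∀ i, 0 ≤ w i) (hw1 : ∑ i, w i = 1)
    (hf : ∀ i, f i < c) : ∑ i, w i * f i < c := by
  obtain ⟨i, -, hi⟩ : ∃ i ∈ univ, (0 : R) < w i :=
    exists_lt_of_sum_lt (by simp [hw1])
  calc ∑ i, w i * f i < ∑ i, w i * c :=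
        sum_lt_sum (fun j _ => mul_le_mul_of_nonneg_left (hf j).le (hw j))
          ⟨i, mem_univ i, mul_lt_mul_of_pos_left (hf i) hi⟩
    _ = c := by rw [← sum_mul, hw1, one_mul]

theorem stmt9_general (k : ℕ) (m : ℕ)
    (hyp : ∀ D : Finset (Fin m) → Finset (Fin m),
      (∀ Wc : Finset (Fin m), Wc.card = k → (D Wc).Nonempty ∧ (D Wc).card ≤ k) →
      ∃ q : Finset (Fin m) → ℚ,
        (∀ Wc, 0 ≤ q Wc) ∧ (∀ Wc : Finset (Fin m), Wc.card ≠ k → q Wc = 0) ∧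
        (∑ Wc : Finset (Fin m), q Wc = 1) ∧
        (∀ A : Finset (Fin m),
          (∑ Wc ∈ Finset.univ.filter
              (fun Wc : Finset (Fin m) => Wc.card = k ∧ (Wc ∩ A).card < (D Wc ∩ A).card),
            q Wc)
            < (∑ Wc : Finset (Fin m), q Wc * ((D Wc).card : ℚ)) / (k : ℚ))) :
    ∀ x : Finset (Fin m) → ℚ, (∀ A, 0 ≤ x A) → (∑ A : Finset (Fin m), x A = 1) →
      ∃ W : Finset (Fin m), W.card = k ∧
        ∀ W' : Finset (Fin m), W'.Nonempty → W'.card ≤ k →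
          (∑ A ∈ Finset.univ.filter
              (fun A : Finset (Fin m) => (A ∩ W).card < (A ∩ W').card), x A)
            < (W'.card : ℚ) / (k : ℚ) := by
  intro x hx hx1
  by_contra! hblocked
  have hdev : ∀ W : Finset (Fin m), ∃ W' : Finset (Fin m), W.card = k →
      W'.Nonempty ∧ W'.card ≤ k ∧ (W'.card : ℚ) / k ≤
        ∑ A ∈ univ.filter (fun A : Finset (Fin m) => (A ∩ W).card < (A ∩ W').card), x A := by
    intro W
    by_cases hW : W.card = k
    · obtain ⟨W', hW'⟩ := hblocked W hW
      exact ⟨W', fun _ => hW'⟩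
    · exact ⟨∅, fun h => absurd h hW⟩
  choose D hD using hdev
  obtain ⟨q, hq0, hq_card, hq1, hq_vote⟩ := hyp D fun W hW => ⟨(hD W hW).1, (hD W hW).2.1⟩
  let prefers (W A : Finset (Fin m)) : Prop := W.card = k ∧ (W ∩ A).card < (D W ∩ A).card
  have hby_committee : (∑ W, q W * ((D W).card : ℚ)) / k ≤
      ∑ W, q W * ∑ A ∈ univ.filter (prefers W), x A := by
    rw [sum_div]
    refine sum_le_sum fun W _ => ?_
    by_cases hW : W.card = k
    · have hfilter : univ.filter (prefers W) =
          univ.filter (fun A : Finset (Fin m) => (A ∩ W).card < (A ∩ D W).card) := by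
        ext A
        simp [prefers, hW, inter_comm]
      rw [mul_div_assoc, hfilter]
      exact mul_le_mul_of_nonneg_left (hD W hW).2.2 (hq0 W)
    · simp [hq_card W hW]
  have hby_vote := sum_mul_lt_of_forall_lt hx hx1 hq_vote
  rw [← sum_mul_sum_filter_comm] at hby_vote
  exact hby_committee.not_gt hby_vote

/-- for `m = k+1`, if for every deviation function `D` there is a
distribution `q` over `k`-committees with
`Pr[|W∩A| < |D(W)∩A|] < E[|D(W)|]/k` for all votes `A`, then every vote
distribution admits a core-stable `k`-committee. -/
theorem stmt9 (k : ℕ) (hk : 1 ≤ k) (m : ℕ) (hm : m = k + 1)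
    (hyp : ∀ D : Finset (Fin m) → Finset (Fin m),
      (∀ Wc : Finset (Fin m), Wc.card = k → (D Wc).Nonempty ∧ (D Wc).card ≤ k) →
      ∃ q : Finset (Fin m) → ℚ,
        (∀ Wc, 0 ≤ q Wc) ∧ (∀ Wc : Finset (Fin m), Wc.card ≠ k → q Wc = 0) ∧
        (∑ Wc : Finset (Fin m), q Wc = 1) ∧
        (∀ A : Finset (Fin m),
          (∑ Wc ∈ Finset.univ.filter
              (fun Wc : Finset (Fin m) => Wc.card = k ∧ (Wc ∩ A).card < (D Wc ∩ A).card),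
            q Wc)
            < (∑ Wc : Finset (Fin m), q Wc * ((D Wc).card : ℚ)) / (k : ℚ))) :
    ∀ x : Finset (Fin m) → ℚ, (∀ A, 0 ≤ x A) → (∑ A : Finset (Fin m), x A = 1) →
      ∃ W : Finset (Fin m), W.card = k ∧
        ∀ W' : Finset (Fin m), W'.Nonempty → W'.card ≤ k →
          (∑ A ∈ Finset.univ.filter
              (fun A : Finset (Fin m) => (A ∩ W).card < (A ∩ W').card), x A)
            < (W'.card : ℚ) / (k : ℚ) :=
  stmt9_general k m hyp
end

section
/- Consider the profile (m = 5 candidates, k = 4) with vote distribution x[{c2,c4}] = x[{c2,c5}] = 1/3, x[{c1,c2,c3}] = x[{c4,c5}] = 1/6, and 0 otherwise. The 4-committee W = {c1,c3,c4,c5} is not Droop core-stable: for W' = {c2,c4,c5}, the support ∑_{A : |A∩W'| > |A∩W|} x[A] = 2/3 > 3/5 = |W'|/(k+1). -/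
/-- Vote distribution of the running example (candidate `cᵢ` is `i - 1 : Fin 5`). -/
def x10 : Finset (Fin 5) → ℚ := fun A =>
  if A = {1, 3} ∨ A = {1, 4} then 1/3
  else if A = {0, 1, 2} ∨ A = {3, 4} then 1/6
  else 0

theorem filter_card_inter_lt_card_inter_eq :
    Finset.univ.filter (fun A : Finset (Fin 5) =>
        (A ∩ {0, 2, 3, 4}).card < (A ∩ {1, 3, 4}).card)
      = {{1}, {1, 3}, {1, 4}, {1, 3, 4}} := by
  decide

theorem sum_x10_filter_card_inter_lt_card_inter :
    (∑ A ∈ Finset.univ.filter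
        (fun A : Finset (Fin 5) =>
          (A ∩ ({0, 2, 3, 4} : Finset (Fin 5))).card
            < (A ∩ ({1, 3, 4} : Finset (Fin 5))).card), x10 A) = 2/3 := by
  rw [filter_card_inter_lt_card_inter_eq, Finset.sum_insert (by decide),
    Finset.sum_insert (by decide), Finset.sum_insert (by decide), Finset.sum_singleton]
  simp +decide only [x10]
  norm_num

/-- for `k = 4`, the committee `W = {c1,c3,c4,c5}` is not Droop
core-stable: the deviation `W' = {c2,c4,c5}` has support `2/3 > 3/5`. -/
theorem stmt10 :
    (∑ A ∈ Finset.univ.filter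
        (fun A : Finset (Fin 5) =>
          (A ∩ ({0, 2, 3, 4} : Finset (Fin 5))).card
            < (A ∩ ({1, 3, 4} : Finset (Fin 5))).card), x10 A) = 2/3 ∧
    (2 : ℚ)/3 > 3/5 ∧
    ¬ (∀ W' : Finset (Fin 5), W'.Nonempty → W'.card ≤ 4 →
        (∑ A ∈ Finset.univ.filter
            (fun A : Finset (Fin 5) =>
              (A ∩ ({0, 2, 3, 4} : Finset (Fin 5))).card < (A ∩ W').card), x10 A)
          ≤ (W'.card : ℚ) / 5) := by
  refine ⟨sum_x10_filter_card_inter_lt_card_inter, by norm_num, fun hstable => ?_⟩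
  have hdeviation := hstable {1, 3, 4} (by decide) (by decide)
  rw [sum_x10_filter_card_inter_lt_card_inter,
    show ({1, 3, 4} : Finset (Fin 5)).card = 3 by decide] at hdeviation
  norm_num at hdeviation
end

section
/- Every priceable committee is weakly priceable: if a k-committee W with respect to an n-voter profile admits a price r > 0 and payment functions f_i satisfying the Peters–Skowron priceability conditions, then there exists a price system p[i,c] ≥ 0 with ∑_i p[i,c] ≤ n/k for all candidates c, and p[i,d] + ∑_{c ∈ A_i ∩ W} p[i,c] > 1 for every voter i and every d ∈ A_i \ W. -/
/-!
Keep the payments `f i c` for the committee members and, for `c ∉ W`, let every supporter `i` of `c`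
offer its whole leftover budget `1 - ∑_{c' ∈ W} f i c'` plus an equal share of the slack
`n/k - T c`, where `T c` is the total leftover of the supporters of `c`. A voter `i` approving
`d ∉ W` then pays `1` plus a positive share towards `P i ∩ W` and `d`, because `f i` is supported
on `P i`. Candidates in `W` cost `r ≤ n/k` (the committee costs `k r` out of a total budget `n`),
and a candidate `c ∉ W` with supporters costs exactly `n/k`. The slack is positive: `T c ≤ r` by condition (5) and
`T c ≤ n - k r` because leftovers are nonnegative, so `k T c ≤ (k - 1) r + (n - k r) = n - r < n`.
-/

open Finset

namespace Priceability

variable {ι C R : Type*} [Field R]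

def leftover (f : ι → C → R) (W : Finset C) (i : ι) : R := 1 - ∑ c ∈ W, f i c

def supporters [Fintype ι] [DecidableEq C] (P : ι → Finset C) (c : C) : Finset ι :=
  univ.filter fun i => c ∈ P i

def supportersLeftover [Fintype ι] [DecidableEq C] (P : ι → Finset C) (f : ι → C → R)
    (W : Finset C) (c : C) : R :=
  ∑ i ∈ supporters P c, leftover f W i

def weakPrice [Fintype ι] [DecidableEq C] (P : ι → Finset C) (f : ι → C → R) (W : Finset C)
    (q : R) (i : ι) (c : C) : R :=
  if c ∈ W then f i c
  else if c ∈ P i then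
    leftover f W i + (q - supportersLeftover P f W c) / #(supporters P c)
  else 0

variable {P : ι → Finset C} {f : ι → C → R} {W : Finset C}

theorem sum_leftover [Fintype ι] {r : R} (hprice : ∀ c ∈ W, ∑ i, f i c = r) :
    ∑ i, leftover f W i = Fintype.card ι - #W * r := by
  have hspent : ∑ i, ∑ c ∈ W, f i c = #W * r := by
    rw [sum_comm, sum_congr rfl hprice, sum_const, nsmul_eq_mul]
  simp only [leftover, sum_sub_distrib, hspent, sum_const, card_univ, nsmul_eq_mul, mul_one]

theorem sum_weakPrice_of_mem [Fintype ι] [DecidableEq C] (q : R) {c : C} (hc : c ∈ W) :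
    ∑ i, weakPrice P f W q i c = ∑ i, f i c := by
  simp only [weakPrice, if_pos hc]

variable [LinearOrder R] [IsStrictOrderedRing R]

theorem leftover_nonneg [Fintype C] (hf : ∀ i c, 0 ≤ f i c) (hbudget : ∀ i, ∑ c, f i c ≤ 1)
    (i : ι) : 0 ≤ leftover f W i := by
  have : ∑ c ∈ W, f i c ≤ ∑ c, f i c :=
    sum_le_sum_of_subset_of_nonneg (subset_univ W) fun c _ _ => hf i c
  unfold leftover
  linarith [hbudget i]

theorem card_mul_le_card [Fintype ι] [Fintype C] {r : R} (hf : ∀ i c, 0 ≤ f i c)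
    (hbudget : ∀ i, ∑ c, f i c ≤ 1) (hprice : ∀ c ∈ W, ∑ i, f i c = r) :
    #W * r ≤ Fintype.card ι := by
  have := sum_nonneg fun i (_ : i ∈ univ) => leftover_nonneg (W := W) hf hbudget i
  rw [sum_leftover hprice] at this
  linarith

variable [Fintype ι] [DecidableEq C]

theorem supportersLeftover_lt [Fintype C] {r : R} (hr : 0 < r) (hW : W.Nonempty)
    (hf : ∀ i c, 0 ≤ f i c) (hbudget : ∀ i, ∑ c, f i c ≤ 1)
    (hprice : ∀ c ∈ W, ∑ i, f i c = r) {c : C} (hc : supportersLeftover P f W c ≤ r) :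
    supportersLeftover P f W c < Fintype.card ι / #W := by
  have htotal : supportersLeftover P f W c ≤ Fintype.card ι - #W * r := by
    rw [← sum_leftover hprice]
    exact sum_le_sum_of_subset_of_nonneg (subset_univ _) fun i _ _ =>
      leftover_nonneg hf hbudget i
  have hk : (1 : R) ≤ #W := by exact_mod_cast hW.card_pos
  rw [lt_div_iff₀ (by linarith)]
  nlinarith [mul_nonneg (sub_nonneg.2 hk) (sub_nonneg.2 hc)]

theorem sum_weakPrice_of_notMem {q : R} (hq : 0 ≤ q) {c : C} (hc : c ∉ W) :
    ∑ i, weakPrice P f W q i c ≤ q := by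
  have hsum : ∑ i, weakPrice P f W q i c = supportersLeftover P f W c
      + #(supporters P c) * ((q - supportersLeftover P f W c) / #(supporters P c)) := by
    simp only [weakPrice, if_neg hc, ← sum_filter, supportersLeftover, supporters,
      sum_add_distrib, sum_const, nsmul_eq_mul]
  rcases (supporters P c).eq_empty_or_nonempty with hempty | hne
  · simp [hsum, supportersLeftover, hempty, hq]
  · rw [hsum, mul_div_cancel₀ _ (by exact_mod_cast hne.card_pos.ne')]
    simp

theorem weakPrice_nonneg [Fintype C] {q : R} (hf : ∀ i c, 0 ≤ f i c)
    (hbudget : ∀ i, ∑ c, f i c ≤ 1) (hslack : ∀ c ∉ W, supportersLeftover P f W c ≤ q)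
    (i : ι) (c : C) : 0 ≤ weakPrice P f W q i c := by
  unfold weakPrice
  split_ifs with hcW hcP
  · exact hf i c
  · have := leftover_nonneg (W := W) hf hbudget i
    have := sub_nonneg.2 (hslack c hcW)
    positivity
  · exact le_rfl

theorem one_lt_weakPrice_add_sum {q : R} (hf : ∀ i c, 0 ≤ f i c)
    (hsupp : ∀ i c, 0 < f i c → c ∈ P i) {i : ι} {d : C} (hd : d ∈ P i \ W)
    (hslack : supportersLeftover P f W d < q) :
    1 < weakPrice P f W q i d + ∑ c ∈ P i ∩ W, weakPrice P f W q i c := by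
  obtain ⟨hdP, hdW⟩ := mem_sdiff.1 hd
  have hmembers : ∑ c ∈ P i ∩ W, weakPrice P f W q i c = ∑ c ∈ W, f i c := by
    have hsupported : ∑ c ∈ P i ∩ W, f i c = ∑ c ∈ W, f i c :=
      sum_subset inter_subset_right fun c hcW hc => (hf i c).eq_or_lt.elim Eq.symm
        fun hpos => absurd (mem_inter.2 ⟨hsupp i c hpos, hcW⟩) hc
    rw [← hsupported]
    exact sum_congr rfl fun c hc => if_pos (mem_inter.1 hc).2
  have hcard : (0 : R) < #(supporters P d) := by
    exact_mod_cast card_pos.2 ⟨i, mem_filter.2 ⟨mem_univ i, hdP⟩⟩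
  have hshare := div_pos (sub_pos.2 hslack) hcard
  rw [hmembers, weakPrice, if_neg hdW, if_pos hdP, leftover]
  linarith

end Priceability

open Priceability in
theorem stmt14_general {C : Type*} [Fintype C] [DecidableEq C]
    (k n : ℕ) (hk : 0 < k)
    (P : Fin n → Finset C) (W : Finset C) (hW : W.card = k)
    (r : ℚ) (f : Fin n → C → ℚ) (hr : 0 < r)
    (hf01 : ∀ i c, 0 ≤ f i c ∧ f i c ≤ 1)
    (hsupp : ∀ i c, 0 < f i c → c ∈ P i)
    (hbudget : ∀ i, (∑ c, f i c) ≤ 1)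
    (hprice : ∀ c ∈ W, (∑ i, f i c) = r)
    (hcond5 : ∀ c ∉ W,
      (∑ i ∈ Finset.univ.filter (fun i => c ∈ P i), (1 - ∑ c' ∈ W, f i c')) ≤ r) :
    ∃ p : Fin n → C → ℚ,
      (∀ i c, 0 ≤ p i c) ∧
      (∀ c, (∑ i, p i c) ≤ (n : ℚ) / k) ∧
      (∀ i : Fin n, ∀ d ∈ P i \ W, 1 < p i d + ∑ c ∈ P i ∩ W, p i c) := by
  have hf i c : 0 ≤ f i c := (hf01 i c).1
  subst hW
  have hslack c (hc : c ∉ W) : supportersLeftover P f W c < n / W.card := by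
    simpa using supportersLeftover_lt hr (card_pos.1 hk) hf hbudget hprice (hcond5 c hc)
  have hrq : r ≤ n / W.card := by
    rw [le_div_iff₀ (by exact_mod_cast hk), mul_comm]
    simpa using card_mul_le_card hf hbudget hprice
  refine ⟨weakPrice P f W (n / W.card),
    weakPrice_nonneg hf hbudget fun c hc => (hslack c hc).le, fun c => ?_,
    fun i d hd => one_lt_weakPrice_add_sum hf hsupp hd (hslack d (Finset.mem_sdiff.1 hd).2)⟩
  by_cases hc : c ∈ W
  · rw [sum_weakPrice_of_mem _ hc, hprice c hc]
    exact hrq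
  · exact sum_weakPrice_of_notMem (by positivity) hc

/-- every priceable committee is weakly priceable. -/
theorem stmt14 {C : Type*} [Fintype C] [DecidableEq C]
    (k n : ℕ) (hk : 0 < k) (hn : 0 < n)
    (P : Fin n → Finset C) (W : Finset C) (hW : W.card = k)
    (r : ℚ) (f : Fin n → C → ℚ) (hr : 0 < r)
    (hf01 : ∀ i c, 0 ≤ f i c ∧ f i c ≤ 1)
    (hsupp : ∀ i c, 0 < f i c → c ∈ P i)
    (hbudget : ∀ i, (∑ c, f i c) ≤ 1)
    (hprice : ∀ c ∈ W, (∑ i, f i c) = r)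
    (hzero : ∀ c ∉ W, (∑ i, f i c) = 0)
    (hcond5 : ∀ c ∉ W,
      (∑ i ∈ Finset.univ.filter (fun i => c ∈ P i), (1 - ∑ c' ∈ W, f i c')) ≤ r) :
    ∃ p : Fin n → C → ℚ,
      (∀ i c, 0 ≤ p i c) ∧
      (∀ c, (∑ i, p i c) ≤ (n : ℚ) / k) ∧
      (∀ i : Fin n, ∀ d ∈ P i \ W, 1 < p i d + ∑ c ∈ P i ∩ W, p i c) :=
  stmt14_general k n hk P W hW r f hr hf01 hsupp hbudget hprice hcond5
end

section
/- For m = 4 candidates and k = 2, the vote distribution x with x[{c3,c4}] = x[{c1,c3,c4}] = x[{c1,c2,c3,c4}] = 1/3 (0 otherwise) admits a committee W = {c1,c2} that is Droop core-stable but not Lindahl priceable. -/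
/-!
The full ballot never blocks `W = {c1,c2}`, and `{c1,c3,c4}` blocks only a two-member `W'`,
so the blocking weight is at most `|W'|/3`. For priceability, the payment constraints for the ballot `{c3,c4}` (with
`T = {c3}`, `{c4}`), for `{c1,c3,c4}` (with each two-element `T`) and for the full ballot (with
`T = {c1,c3,c4}`), weighted by `1/3, 1/3, 1/6, 1/6, 1/6, 1/3`, force the three ballots to spend
more than `3/2` on `c1, c3, c4`, whereas the budgets of these three candidates allow only `3/2`.
-/

/-- The counterexample distribution for `m = 4`, `k = 2` (candidate `cᵢ` is
`i - 1 : Fin 4`): mass `1/3` on `{c3,c4}, {c1,c3,c4}, {c1,c2,c3,c4}`. -/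
def x17 : Finset (Fin 4) → ℚ := fun A =>
  if A = {2, 3} ∨ A = {0, 2, 3} ∨ A = {0, 1, 2, 3} then 1/3 else 0

open Finset

section Committees

variable {C : Type*} [Fintype C] [DecidableEq C]

/-- `x A` is the fraction of voters with approval ballot `A`. -/
def IsDroopCoreStable (x : Finset C → ℚ) (k : ℕ) (W : Finset C) : Prop :=
  ∀ W' : Finset C, W'.Nonempty → W'.card ≤ k →
    ∑ A ∈ univ.filter (fun A => (A ∩ W).card < (A ∩ W').card), x A ≤ W'.card / (k + 1)

/-- `p A c` is the price a voter with ballot `A` pays for candidate `c`. -/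
def IsLindahlPriceable (x : Finset C → ℚ) (k : ℕ) (W : Finset C) : Prop :=
  ∃ p : Finset C → C → ℚ, (∀ A c, 0 ≤ p A c) ∧ (∀ c, ∑ A, x A * p A c ≤ 1 / k) ∧
    ∀ A T : Finset C, (A ∩ W).card < (A ∩ T).card → 1 < ∑ c ∈ T, p A c

end Committees

lemma sum_x17_mul (f : Finset (Fin 4) → ℚ) :
    ∑ A, x17 A * f A = (f {2, 3} + f {0, 2, 3} + f {0, 1, 2, 3}) / 3 := by
  have hsupp : ∀ A ∉ ({{2, 3}, {0, 2, 3}, {0, 1, 2, 3}} : Finset (Finset (Fin 4))),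
      x17 A * f A = 0 := by
    intro A hA
    simp_all [x17]
  rw [← sum_subset (subset_univ _) fun A _ hA => hsupp A hA,
    sum_insert (by decide), sum_insert (by decide), sum_singleton]
  simp only [x17]
  norm_num
  ring

lemma sum_filter_x17 (P : Finset (Fin 4) → Prop) [DecidablePred P] :
    ∑ A ∈ univ.filter P, x17 A =
      ((if P {2, 3} then 1 else 0) + (if P {0, 2, 3} then 1 else 0) +
        (if P {0, 1, 2, 3} then 1 else 0)) / 3 := by
  have h := sum_x17_mul fun A => if P A then 1 else 0
  simp only [mul_boole] at h
  rw [sum_filter, h]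

theorem x17_isDroopCoreStable : IsDroopCoreStable x17 2 {0, 1} := by
  intro W' hW' hcard
  have one_le_card : (1 : ℚ) ≤ W'.card := by exact_mod_cast hW'.card_pos
  have full_not_blocking : ¬ (({0, 1, 2, 3} : Finset (Fin 4)) ∩ {0, 1}).card
      < (({0, 1, 2, 3} : Finset (Fin 4)) ∩ W').card := by
    have := card_le_card (inter_subset_right (s₁ := {0, 1, 2, 3}) (s₂ := W'))
    rw [show (({0, 1, 2, 3} : Finset (Fin 4)) ∩ {0, 1}).card = 2 by decide]
    omega
  have card_eq_two_of_blocking : (({0, 2, 3} : Finset (Fin 4)) ∩ {0, 1}).card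
      < (({0, 2, 3} : Finset (Fin 4)) ∩ W').card → (W'.card : ℚ) = 2 := by
    have := card_le_card (inter_subset_right (s₁ := {0, 2, 3}) (s₂ := W'))
    rw [show (({0, 2, 3} : Finset (Fin 4)) ∩ {0, 1}).card = 1 by decide]
    intro h
    exact_mod_cast (by omega : W'.card = 2)
  rw [sum_filter_x17, if_neg full_not_blocking]
  push_cast
  by_cases hblock : (({0, 2, 3} : Finset (Fin 4)) ∩ {0, 1}).card
      < (({0, 2, 3} : Finset (Fin 4)) ∩ W').card
  · rw [if_pos hblock, card_eq_two_of_blocking hblock]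
    split_ifs <;> norm_num
  · rw [if_neg hblock]
    split_ifs <;> linarith

theorem x17_not_isLindahlPriceable : ¬ IsLindahlPriceable x17 2 {0, 1} := by
  rintro ⟨p, hp, hbudget, hpay⟩
  simp only [sum_x17_mul] at hbudget
  have h1 := hpay {2, 3} {2} (by decide)
  have h2 := hpay {2, 3} {3} (by decide)
  have h3 := hpay {0, 2, 3} {0, 2} (by decide)
  have h4 := hpay {0, 2, 3} {0, 3} (by decide)
  have h5 := hpay {0, 2, 3} {2, 3} (by decide)
  have h6 := hpay {0, 1, 2, 3} {0, 2, 3} (by decide)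
  simp only [Fin.isValue, sum_singleton, mem_singleton, Fin.reduceEq, not_false_eq_true,
    sum_insert, mem_insert, or_self] at h1 h2 h3 h4 h5 h6
  linarith [hbudget 0, hbudget 2, hbudget 3, hp {2, 3} 0]

/-- for `m = 4`, `k = 2`, the committee `W = {c1,c2}` is Droop
core-stable w.r.t. `x17` but not Lindahl priceable. -/
theorem stmt17 :
    (∀ W' : Finset (Fin 4), W'.Nonempty → W'.card ≤ 2 →
      (∑ A ∈ Finset.univ.filter
          (fun A : Finset (Fin 4) =>
            (A ∩ ({0, 1} : Finset (Fin 4))).card < (A ∩ W').card), x17 A)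
        ≤ (W'.card : ℚ) / 3) ∧
    ¬ (∃ p : Finset (Fin 4) → Fin 4 → ℚ,
        (∀ A c, 0 ≤ p A c) ∧
        (∀ c, (∑ A : Finset (Fin 4), x17 A * p A c) ≤ 1 / 2) ∧
        (∀ A T : Finset (Fin 4),
          (A ∩ ({0, 1} : Finset (Fin 4))).card < (A ∩ T).card →
            1 < ∑ c ∈ T, p A c)) := by
  refine ⟨fun W' hW' hcard => ?_, x17_not_isLindahlPriceable⟩
  convert x17_isDroopCoreStable W' hW' hcard using 2
  norm_num
end
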